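/- arXiv:math/0506170 — 2 statements merged into one kernel-verified Lean document; each statement's English description precedes it below -/
import Mathlib

section
/- For every m ≥ 1, every σ ∈ Σ_m and every 0 ≤ i ≤ m+1, the grade satisfies g(d_i(σ)) = g(σ) + 1; that is, each doubling map raises the grade by exactly one. -/
/-!
Extend `σ ∈ Σ_m` by the fixed points `0` and `m + 1` (and beyond) to a permutation `frame σ` of
`ℕ`, and count its adjacencies: the positions `j ≤ m` with `frame σ (j + 1) = frame σ j + 1`.
For `σ ≠ id` there are exactly `a(σ) + b(σ) + c(σ)` of them: the fixed blocks at both ends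
contribute `a(σ)` and `c(σ)`, the two borders of the middle block none, and the middle block
`b(σ)`. Every `d_i(σ)`, including `d_0(σ)` and `d_{m+1}(σ)`, is obtained by doubling the strand `i`
of the framed permutation; this creates the adjacency `(i, i + 1)` and matches the remaining
adjacencies with those of `σ`, so the count goes up by exactly one. As only the identity has the
maximal number `m + 1` of adjacencies, `d_i(σ) = id` iff `σ = id`, and for the identity the claim
reads `m = (m - 1) + 1`.
-/

namespace MarklOps

/-- The juxtaposition `σ × id₁ ∈ Σ_{m+1}` of `σ ∈ Σ_m` with the identity on one strand. -/
def extLast {m : ℕ} (σ : Equiv.Perm (Fin m)) : Equiv.Perm (Fin (m + 1)) :=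
  (finSuccEquivLast.symm).permCongr σ.optionCongr

/-- The cycle `ρ_v ∈ Σ_{m+1}` (0-based) fixing `k < v`, sending `k ↦ k+1` for `v ≤ k < m`
and `m ↦ v`. -/
def rho {m : ℕ} (v : Fin (m + 1)) : Equiv.Perm (Fin (m + 1)) :=
  Fin.revPerm * (Fin.cycleRange v.rev)⁻¹ * Fin.revPerm

/-- The doubling map `d_i(σ) ∈ Σ_{m+1}` of `σ ∈ Σ_m`, for the (1-based) paper index
`0 ≤ i ≤ m+1`: for `1 ≤ i ≤ m` it doubles the `i`-th input strand of `σ`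
(it sends `i ↦ σ(i)`, `i+1 ↦ σ(i)+1`, and for `j < i` resp. `j > i+1` it sends `j` to
`σ(j)` resp. `σ(j−1)` if this value is less than `σ(i)`, and to `σ(j)+1` resp. `σ(j−1)+1`
otherwise); moreover `d_0(σ) = id_1 × σ` and `d_{m+1}(σ) = σ × id_1`. -/
def dbl {m : ℕ} (σ : Equiv.Perm (Fin m)) (i : ℕ) : Equiv.Perm (Fin (m + 1)) :=
  if h : 1 ≤ i ∧ i ≤ m then
    rho (Fin.succ (σ ⟨i - 1, by omega⟩)) * extLast σ * (rho ⟨i, by omega⟩)⁻¹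
  else if i = 0 then
    rho ⟨0, Nat.succ_pos m⟩ * extLast σ * (rho ⟨0, Nat.succ_pos m⟩)⁻¹
  else
    extLast σ

/-- The differential `δ_m : k[Σ_m] → k[Σ_{m+1}]`, `δ_m(σ) = Σ_{i=0}^{m+1} (−1)^i d_i(σ)`. -/
noncomputable def delta (k : Type*) [Field k] (m : ℕ) :
    MonoidAlgebra k (Equiv.Perm (Fin m)) →ₗ[k] MonoidAlgebra k (Equiv.Perm (Fin (m + 1))) :=
  Finsupp.lift (MonoidAlgebra k (Equiv.Perm (Fin (m + 1)))) k (Equiv.Perm (Fin m))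
    (fun σ => ∑ i ∈ Finset.range (m + 2),
      ((-1 : k) ^ i) • MonoidAlgebra.of k (Equiv.Perm (Fin (m + 1))) (dbl σ i))
    ∘ₗ (MonoidAlgebra.coeffLinearEquiv k).toLinearMap

/-- `a(σ)`: the largest `a` such that `σ` fixes the first `a` points (0-based: all `j < a`). -/
def aOf {m : ℕ} (σ : Equiv.Perm (Fin m)) : ℕ :=
  Nat.findGreatest (fun a => ∀ j : Fin m, (j : ℕ) < a → σ j = j) m

/-- `c(σ)`: the largest `c` such that `σ` fixes the last `c` points. -/
def cOf {m : ℕ} (σ : Equiv.Perm (Fin m)) : ℕ :=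
  Nat.findGreatest (fun c => ∀ j : Fin m, m - c ≤ (j : ℕ) → σ j = j) m

/-- Length `m − a(σ) − c(σ)` of the middle block of `σ`. -/
def midLen {m : ℕ} (σ : Equiv.Perm (Fin m)) : ℕ := m - aOf σ - cOf σ

lemma fix_low {m : ℕ} (σ : Equiv.Perm (Fin m)) (j : Fin m) (hj : (j : ℕ) < aOf σ) :
    σ j = j := by
  have h := Nat.findGreatest_spec (P := fun a => ∀ j : Fin m, (j : ℕ) < a → σ j = j)
    (Nat.zero_le m) (fun j hj => absurd hj (by omega))
  exact h j hj

lemma fix_high {m : ℕ} (σ : Equiv.Perm (Fin m)) (j : Fin m) (hj : m - cOf σ ≤ (j : ℕ)) :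
    σ j = j := by
  have h := Nat.findGreatest_spec (P := fun c => ∀ j : Fin m, m - c ≤ (j : ℕ) → σ j = j)
    (Nat.zero_le m) (fun j hj => absurd hj (by have := j.isLt; omega))
  exact h j hj

lemma mid_mem {m : ℕ} (σ : Equiv.Perm (Fin m)) (x : Fin m)
    (hx : aOf σ ≤ (x : ℕ) ∧ (x : ℕ) < m - cOf σ) :
    aOf σ ≤ (σ x : ℕ) ∧ (σ x : ℕ) < m - cOf σ := by
  by_contra hcon
  have h1 : (σ x : ℕ) < aOf σ ∨ m - cOf σ ≤ (σ x : ℕ) := by omega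
  have h2 : σ (σ x) = σ x := h1.elim (fix_low σ _) (fix_high σ _)
  have h3 : σ x = x := σ.injective h2
  rw [h3] at h1
  omega

/-- The middle part `ω(σ)` of `σ` as a function, `s ↦ σ(a(σ)+s) − a(σ)`. -/
def midFun {m : ℕ} (σ : Equiv.Perm (Fin m)) (s : Fin (midLen σ)) : Fin (midLen σ) :=
  ⟨(σ ⟨aOf σ + (s : ℕ), by have := s.isLt; unfold midLen at this; omega⟩ : ℕ) - aOf σ, by
    have hs := s.isLt
    unfold midLen at hs ⊢
    have hm := mid_mem σ ⟨aOf σ + (s : ℕ), by omega⟩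
      ⟨by simp, by simp; omega⟩
    omega⟩

lemma midFun_injective {m : ℕ} (σ : Equiv.Perm (Fin m)) : Function.Injective (midFun σ) := by
  intro s t h
  have hs := s.isLt
  have ht := t.isLt
  unfold midLen at hs ht
  have hv : ((σ ⟨aOf σ + (s : ℕ), by omega⟩ : Fin m) : ℕ) - aOf σ
      = ((σ ⟨aOf σ + (t : ℕ), by omega⟩ : Fin m) : ℕ) - aOf σ := congrArg Fin.val h
  have hms := mid_mem σ ⟨aOf σ + (s : ℕ), by omega⟩ ⟨by simp, by simp; omega⟩
  have hmt := mid_mem σ ⟨aOf σ + (t : ℕ), by omega⟩ ⟨by simp, by simp; omega⟩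
  have hv2 : (σ ⟨aOf σ + (s : ℕ), by omega⟩ : Fin m) = σ ⟨aOf σ + (t : ℕ), by omega⟩ :=
    Fin.ext (by omega)
  have := congrArg Fin.val (σ.injective hv2)
  simp at this
  exact Fin.ext (by omega)

/-- The middle part `ω(σ) ∈ Σ_{m−a(σ)−c(σ)}` of `σ`, with `ω(σ)(s) = σ(a(σ)+s) − a(σ)`. -/
noncomputable def midPerm {m : ℕ} (σ : Equiv.Perm (Fin m)) : Equiv.Perm (Fin (midLen σ)) :=
  Equiv.ofBijective (midFun σ) (Finite.injective_iff_bijective.mp (midFun_injective σ))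

/-- `b(σ)`: the number of doubled strings in `ω(σ)`, i.e. of indices `s` with
`ω(σ)(s+1) = ω(σ)(s)+1`. -/
noncomputable def bOf {m : ℕ} (σ : Equiv.Perm (Fin m)) : ℕ :=
  (Finset.univ.filter fun s : Fin (midLen σ) =>
    ∃ h : (s : ℕ) + 1 < midLen σ,
      (midPerm σ ⟨(s : ℕ) + 1, h⟩ : ℕ) = (midPerm σ s : ℕ) + 1).card

/-- The grade `g(σ)` of a permutation `σ ∈ Σ_m`: `g(id_m) = m−1` and
`g(σ) = a(σ) + b(σ) + c(σ)` otherwise.  A permutation is primitive iff its grade is `0`. -/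
noncomputable def grade {m : ℕ} (σ : Equiv.Perm (Fin m)) : ℕ :=
  if σ = 1 then m - 1 else aOf σ + bOf σ + cOf σ

open Equiv Function

lemma count_congr_of_lt {p q : ℕ → Prop} [DecidablePred p] [DecidablePred q] {n : ℕ}
    (h : ∀ j < n, q j ↔ p j) : Nat.count q n = Nat.count p n :=
  le_antisymm (Nat.count_mono_left fun j hj => (h j hj).1)
    (Nat.count_mono_left fun j hj => (h j hj).2)

lemma count_succ_eq_of_insert {p q : ℕ → Prop} [DecidablePred p] [DecidablePred q] {i n : ℕ}
    (hi : i ≤ n) (hlt : ∀ j < i, q j ↔ p j) (hqi : q i)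
    (hgt : ∀ j, q (i + 1 + j) ↔ p (i + j)) :
    Nat.count q (n + 1) = Nat.count p n + 1 := by
  obtain ⟨k, rfl⟩ := Nat.exists_eq_add_of_le hi
  rw [show i + k + 1 = i + 1 + k by omega, Nat.count_add (p := q), Nat.count_add (p := p),
    Nat.count_succ, if_pos hqi, count_congr_of_lt hlt, count_congr_of_lt fun j _ => hgt j]
  omega

open scoped Count in
lemma card_filter_univ_fin_eq_count (p : ℕ → Prop) [DecidablePred p] (n : ℕ) :
    (Finset.univ.filter fun s : Fin n => p s).card = Nat.count p n := by
  rw [Nat.count_eq_card_fintype, ← Fintype.card_subtype]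
  exact Fintype.card_congr
    ⟨fun s => ⟨s.1, s.1.2, s.2⟩, fun k => ⟨⟨k.1, k.2.1⟩, k.2.2⟩, fun _ => rfl, fun _ => rfl⟩

def liftAbove (s x : ℕ) : ℕ := if x ≤ s then x else x + 1

def doubleAt (f : ℕ → ℕ) (i j : ℕ) : ℕ :=
  if j ≤ i then liftAbove (f i) (f j)
  else if j = i + 1 then f i + 1 else liftAbove (f i) (f (j - 1))

lemma liftAbove_eq_liftAbove_add_one_iff {s x y : ℕ} (h : x ≠ s) :
    liftAbove s y = liftAbove s x + 1 ↔ y = x + 1 := by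
  unfold liftAbove
  split_ifs <;> omega

section DoubleAt

variable {f : ℕ → ℕ} {i j : ℕ}

lemma doubleAt_of_le (h : j ≤ i) : doubleAt f i j = liftAbove (f i) (f j) := if_pos h

lemma doubleAt_succ_self : doubleAt f i (i + 1) = f i + 1 := by
  simp [doubleAt]

lemma doubleAt_of_succ_lt (h : i + 1 < j) : doubleAt f i j = liftAbove (f i) (f (j - 1)) := by
  simp only [doubleAt, show ¬ j ≤ i by omega, show j ≠ i + 1 by omega, if_false]

lemma doubleAt_adj_of_lt (hf : Injective f) (hj : j < i) :
    doubleAt f i (j + 1) = doubleAt f i j + 1 ↔ f (j + 1) = f j + 1 := by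
  rw [doubleAt_of_le hj, doubleAt_of_le hj.le]
  exact liftAbove_eq_liftAbove_add_one_iff (hf.ne hj.ne)

lemma doubleAt_adj_self : doubleAt f i (i + 1) = doubleAt f i i + 1 := by
  rw [doubleAt_succ_self, doubleAt_of_le le_rfl, liftAbove, if_pos le_rfl]

lemma doubleAt_adj_of_gt (hf : Injective f) (j : ℕ) :
    doubleAt f i (i + 1 + j + 1) = doubleAt f i (i + 1 + j) + 1 ↔
      f (i + j + 1) = f (i + j) + 1 := by
  rcases j with _ | j
  · rw [doubleAt_of_succ_lt (by omega), add_zero, add_zero, doubleAt_succ_self,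
      Nat.add_sub_cancel, liftAbove]
    split_ifs <;> omega
  · rw [doubleAt_of_succ_lt (by omega), doubleAt_of_succ_lt (by omega),
      show i + 1 + (j + 1) + 1 - 1 = i + (j + 1) + 1 by omega,
      show i + 1 + (j + 1) - 1 = i + (j + 1) by omega]
    exact liftAbove_eq_liftAbove_add_one_iff (hf.ne (by omega))

end DoubleAt

section Frame

variable {m : ℕ}

/-- `σ` in the 1-based notation of the paper, extended by the fixed points `0` and `j > m`. -/
def frame (σ : Perm (Fin m)) : ℕ → ℕ
  | 0 => 0
  | j + 1 => if h : j < m then σ ⟨j, h⟩ + 1 else j + 1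

@[simp] lemma frame_zero (σ : Perm (Fin m)) : frame σ 0 = 0 := rfl

lemma frame_succ_fin (σ : Perm (Fin m)) (j : Fin m) : frame σ (j + 1) = σ j + 1 := by
  simp [frame]

lemma frame_of_lt (σ : Perm (Fin m)) {j : ℕ} (hj : m < j) : frame σ j = j := by
  obtain ⟨k, rfl⟩ := Nat.exists_eq_add_of_lt (Nat.zero_lt_of_lt hj)
  simp [frame, show ¬ k < m by omega]

lemma frame_lt_succ (σ : Perm (Fin m)) {j : ℕ} (hj : j ≤ m) : frame σ j < m + 1 := by
  cases j with
  | zero => simp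
  | succ k => simp [frame, show k < m by omega]

@[simp] lemma frame_one : frame (1 : Perm (Fin m)) = id := by
  funext j
  cases j with
  | zero => rfl
  | succ k => by_cases hk : k < m <;> simp [frame, hk]

lemma frame_mul (σ τ : Perm (Fin m)) : frame (σ * τ) = frame σ ∘ frame τ := by
  funext j
  cases j with
  | zero => rfl
  | succ k => by_cases hk : k < m <;> simp [frame, hk]

lemma frame_inv_frame (σ : Perm (Fin m)) (x : ℕ) : frame σ⁻¹ (frame σ x) = x := by
  rw [← comp_apply (f := frame σ⁻¹), ← frame_mul, inv_mul_cancel, frame_one, id]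

lemma frame_injective (σ : Perm (Fin m)) : Injective (frame σ) :=
  LeftInverse.injective (frame_inv_frame σ)

lemma extLast_castSucc (σ : Perm (Fin m)) (j : Fin m) :
    extLast σ j.castSucc = (σ j).castSucc := by
  simp [extLast, Equiv.permCongr_apply]

lemma extLast_last (σ : Perm (Fin m)) : extLast σ (Fin.last m) = Fin.last m := by
  simp [extLast, Equiv.permCongr_apply]

lemma frame_extLast (σ : Perm (Fin m)) : frame (extLast σ) = frame σ := by
  funext j
  rcases j with _ | k
  · rfl
  · rcases lt_trichotomy k m with hk | rfl | hk
    · have h := frame_succ_fin (extLast σ) (Fin.castSucc ⟨k, hk⟩)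
      rw [extLast_castSucc] at h
      simpa [frame_succ_fin σ ⟨k, hk⟩] using h
    · have h := frame_succ_fin (extLast σ) (Fin.last k)
      rw [extLast_last] at h
      simpa [frame_of_lt σ (Nat.lt_succ_self k)] using h
    · rw [frame_of_lt _ (by omega), frame_of_lt _ (by omega)]

lemma rho_inv_val (v k : Fin (m + 1)) :
    ((rho v)⁻¹ k : ℕ) =
      if (k : ℕ) < v then (k : ℕ) else if (k : ℕ) = v then m else (k : ℕ) - 1 := by
  have hinv : (rho v)⁻¹ = Fin.revPerm * Fin.cycleRange v.rev * Fin.revPerm := by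
    simp [rho, mul_assoc, Perm.inv_def, Fin.revPerm_symm]
  rw [hinv]
  simp only [Perm.mul_apply, Fin.revPerm_apply, Fin.cycleRange_apply]
  split_ifs <;>
    simp only [Fin.lt_def, Fin.ext_iff, Fin.val_rev, Fin.val_add_one, Fin.val_last, Fin.val_zero]
      at * <;> (try split_ifs at *) <;> omega

lemma frame_rho_inv (v : Fin (m + 1)) (j : ℕ) :
    frame (rho v)⁻¹ j =
      if j ≤ v then j else if j = v + 1 then m + 1 else if j ≤ m + 1 then j - 1 else j := by
  rcases j with _ | k
  · simp
  · by_cases hk : k < m + 1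
    · have h := frame_succ_fin (rho v)⁻¹ ⟨k, hk⟩
      rw [rho_inv_val] at h
      dsimp only at h
      rw [h]
      split_ifs <;> omega
    · rw [frame_of_lt _ (by omega)]
      split_ifs <;> omega

lemma frame_rho (v : Fin (m + 1)) (j : ℕ) :
    frame (rho v) j =
      if j ≤ v then j else if j ≤ m then j + 1 else if j = m + 1 then v + 1 else j := by
  apply frame_injective (rho v)⁻¹
  rw [frame_inv_frame, frame_rho_inv]
  split_ifs <;> omega

end Frame

section Doubling

variable {m : ℕ}

lemma dbl_of_le (σ : Perm (Fin m)) {i : ℕ} (hi : i ≤ m) :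
    dbl σ i = rho ⟨frame σ i, frame_lt_succ σ hi⟩ * extLast σ * (rho ⟨i, by omega⟩)⁻¹ := by
  unfold dbl
  split_ifs with h h0
  · obtain ⟨k, rfl⟩ := Nat.exists_eq_add_of_le' h.1
    congr
    exact Fin.ext (frame_succ_fin σ ⟨k, by omega⟩).symm
  · subst h0; rfl
  · omega

-- `(rho u)⁻¹` parks position `u + 1` at `m + 1`, which `extLast σ` fixes and `rho` then sends
-- to `frame σ u + 1`; all other positions are merely reindexed.
lemma frame_rho_mul_extLast_mul_rho_inv (σ : Perm (Fin m)) {u : ℕ} (hu : u ≤ m) :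
    frame (rho ⟨frame σ u, frame_lt_succ σ hu⟩ * extLast σ * (rho ⟨u, by omega⟩)⁻¹) =
      doubleAt (frame σ) u := by
  funext j
  have hfu := frame_lt_succ σ hu
  rw [frame_mul, frame_mul, frame_extLast]
  simp only [comp_apply, frame_rho_inv, doubleAt, liftAbove]
  rcases le_or_gt j u with h1 | h1
  · have := frame_lt_succ σ (show j ≤ m by omega)
    simp only [h1, if_true, frame_rho]
    split_ifs <;> omega
  rcases eq_or_ne j (u + 1) with rfl | h2
  · simp only [show ¬ u + 1 ≤ u by omega, if_true, if_false, frame_of_lt σ (Nat.lt_succ_self m),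
      frame_rho]
    split_ifs <;> omega
  rcases le_or_gt j (m + 1) with h3 | h3
  · have := frame_lt_succ σ (show j - 1 ≤ m by omega)
    simp only [show ¬ j ≤ u by omega, h2, h3, if_true, if_false, frame_rho]
    split_ifs <;> omega
  · simp only [show ¬ j ≤ u by omega, h2, show ¬ j ≤ m + 1 by omega, if_false,
      frame_of_lt σ (show m < j by omega), frame_of_lt σ (show m < j - 1 by omega), frame_rho]
    split_ifs <;> omega

lemma doubleAt_frame_last (σ : Perm (Fin m)) : doubleAt (frame σ) (m + 1) = frame σ := by
  funext j
  have hlast := frame_of_lt σ (Nat.lt_succ_self m)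
  rcases le_or_gt j (m + 1) with h | h
  · have hj : frame σ j ≤ m + 1 := by
      rcases h.lt_or_eq with h | rfl
      · exact (frame_lt_succ σ (by omega)).le
      · exact hlast.le
    rw [doubleAt_of_le h, liftAbove, hlast, if_pos hj]
  · rcases eq_or_ne j (m + 2) with rfl | h'
    · rw [doubleAt_succ_self, hlast, frame_of_lt σ (by omega)]
    · rw [doubleAt_of_succ_lt (by omega), liftAbove, hlast, frame_of_lt σ (show m < j - 1 by omega),
        frame_of_lt σ h.le, if_neg (by omega)]
      omega

lemma frame_dbl (σ : Perm (Fin m)) {i : ℕ} (hi : i ≤ m + 1) :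
    frame (dbl σ i) = doubleAt (frame σ) i := by
  rcases Nat.lt_or_ge i (m + 1) with h | h
  · rw [dbl_of_le σ (by omega), frame_rho_mul_extLast_mul_rho_inv σ (by omega)]
  · obtain rfl : i = m + 1 := by omega
    rw [dbl, dif_neg (by omega), if_neg (by omega), frame_extLast, doubleAt_frame_last]

end Doubling

section AdjCount

variable {m : ℕ}

def adjCount (σ : Perm (Fin m)) : ℕ :=
  Nat.count (fun j => frame σ (j + 1) = frame σ j + 1) (m + 1)

lemma adjCount_dbl (σ : Perm (Fin m)) {i : ℕ} (hi : i ≤ m + 1) :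
    adjCount (dbl σ i) = adjCount σ + 1 := by
  unfold adjCount
  rw [frame_dbl σ hi]
  exact count_succ_eq_of_insert hi (fun _ hj => doubleAt_adj_of_lt (frame_injective σ) hj)
    doubleAt_adj_self (doubleAt_adj_of_gt (frame_injective σ))

@[simp] lemma adjCount_one : adjCount (1 : Perm (Fin m)) = m + 1 := by
  simp [adjCount]

lemma frame_eq_self_of_forall_adj {σ : Perm (Fin m)}
    (h : ∀ j < m + 1, frame σ (j + 1) = frame σ j + 1) : ∀ j ≤ m + 1, frame σ j = j
  | 0, _ => rfl
  | j + 1, hj => by rw [h j (by omega), frame_eq_self_of_forall_adj h j (by omega)]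

lemma eq_one_of_adjCount (σ : Perm (Fin m)) (h : adjCount σ = m + 1) : σ = 1 := by
  have hfix := frame_eq_self_of_forall_adj (Nat.count_iff_forall.1 h)
  ext k
  have := frame_succ_fin σ k
  rw [hfix _ (by omega)] at this
  simp only [Perm.one_apply]
  omega

end AdjCount

section Grade

variable {m : ℕ}

lemma aOf_le (σ : Perm (Fin m)) : aOf σ ≤ m := Nat.findGreatest_le m

lemma cOf_le (σ : Perm (Fin m)) : cOf σ ≤ m := Nat.findGreatest_le m

lemma frame_of_le_aOf (σ : Perm (Fin m)) {j : ℕ} (hj : j ≤ aOf σ) : frame σ j = j := by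
  rcases j with _ | k
  · rfl
  · have hk : k < m := by have := aOf_le σ; omega
    have := frame_succ_fin σ ⟨k, hk⟩
    rw [fix_low σ ⟨k, hk⟩ (by dsimp only; omega)] at this
    exact this

lemma frame_of_sub_cOf_lt (σ : Perm (Fin m)) {j : ℕ} (hj : m - cOf σ < j) : frame σ j = j := by
  rcases j with _ | k
  · omega
  · by_cases hk : k < m
    · have := frame_succ_fin σ ⟨k, hk⟩
      rw [fix_high σ ⟨k, hk⟩ (by dsimp only; omega)] at this
      exact this
    · exact frame_of_lt σ (by omega)

variable {σ : Perm (Fin m)}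

lemma frame_aOf_succ_ne (hσ : σ ≠ 1) : frame σ (aOf σ + 1) ≠ aOf σ + 1 := by
  intro h
  have hA : aOf σ < m := by
    by_contra hA
    exact hσ (Equiv.ext fun x => fix_low σ x (by omega))
  refine Nat.findGreatest_is_greatest (lt_add_one (aOf σ)) hA fun j hj => ?_
  rcases Nat.lt_succ_iff_lt_or_eq.1 hj with hj | hj
  · exact fix_low σ j hj
  · have := frame_succ_fin σ j
    rw [hj, h] at this
    exact Fin.ext (by omega)

lemma cOf_lt (hσ : σ ≠ 1) : cOf σ < m := by
  by_contra hC
  exact hσ (Equiv.ext fun x => fix_high σ x (by omega))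

lemma frame_sub_cOf_ne (hσ : σ ≠ 1) : frame σ (m - cOf σ) ≠ m - cOf σ := by
  intro h
  have hC := cOf_lt hσ
  refine Nat.findGreatest_is_greatest (lt_add_one (cOf σ)) hC fun j hj => ?_
  rcases (show (j : ℕ) = m - cOf σ - 1 ∨ m - cOf σ ≤ j by omega) with hj | hj
  · have := frame_succ_fin σ j
    rw [hj, show m - cOf σ - 1 + 1 = m - cOf σ by omega, h] at this
    exact Fin.ext (by omega)
  · exact fix_high σ j hj

lemma aOf_lt_sub_cOf (hσ : σ ≠ 1) : aOf σ < m - cOf σ := by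
  by_contra h
  exact frame_aOf_succ_ne hσ (frame_of_sub_cOf_lt σ (by omega))

lemma frame_eq_midPerm (σ : Perm (Fin m)) (s : Fin (midLen σ)) {j : ℕ}
    (hj : j = aOf σ + 1 + s) : frame σ j = midPerm σ s + aOf σ + 1 := by
  have hs := s.isLt
  unfold midLen at hs
  have hmem := mid_mem σ ⟨aOf σ + s, by omega⟩ ⟨by dsimp only; omega, by dsimp only; omega⟩
  have hframe := frame_succ_fin σ ⟨aOf σ + s, by omega⟩
  dsimp only at hframe
  rw [hj, show aOf σ + 1 + s = aOf σ + s + 1 by omega, hframe]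
  show _ = ((σ ⟨aOf σ + s, _⟩ : ℕ) - aOf σ) + aOf σ + 1
  omega

lemma bOf_eq_count (σ : Perm (Fin m)) :
    bOf σ = Nat.count (fun s => frame σ (aOf σ + 1 + s + 1) = frame σ (aOf σ + 1 + s) + 1)
      (midLen σ - 1) := by
  have key : ∀ s : Fin (midLen σ), (∃ h : (s : ℕ) + 1 < midLen σ,
      (midPerm σ ⟨s + 1, h⟩ : ℕ) = midPerm σ s + 1) ↔
      (s : ℕ) + 1 < midLen σ ∧ frame σ (aOf σ + 1 + s + 1) = frame σ (aOf σ + 1 + s) + 1 := by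
    intro s
    rw [frame_eq_midPerm σ s rfl]
    constructor
    · rintro ⟨h, e⟩
      rw [frame_eq_midPerm σ ⟨s + 1, h⟩ (by dsimp only; omega)]
      exact ⟨h, by omega⟩
    · rintro ⟨h, e⟩
      rw [frame_eq_midPerm σ ⟨s + 1, h⟩ (by dsimp only; omega)] at e
      exact ⟨h, by omega⟩
  rw [bOf, Finset.filter_congr fun s _ => key s, card_filter_univ_fin_eq_count
    (fun s => s + 1 < midLen σ ∧ frame σ (aOf σ + 1 + s + 1) = frame σ (aOf σ + 1 + s) + 1)]
  generalize midLen σ = L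
  rcases L with _ | L
  · rfl
  · rw [Nat.count_succ, if_neg (by omega), add_zero, Nat.add_sub_cancel]
    exact count_congr_of_lt fun j hj => and_iff_right (by omega)

lemma frame_adj_of_lt_aOf (σ : Perm (Fin m)) {j : ℕ} (hj : j < aOf σ) :
    frame σ (j + 1) = frame σ j + 1 := by
  rw [frame_of_le_aOf σ hj, frame_of_le_aOf σ hj.le]

lemma frame_adj_of_sub_cOf_lt (σ : Perm (Fin m)) {j : ℕ} (hj : m - cOf σ < j) :
    frame σ (j + 1) = frame σ j + 1 := by
  rw [frame_of_sub_cOf_lt σ (by omega), frame_of_sub_cOf_lt σ hj]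

lemma frame_not_adj_aOf (hσ : σ ≠ 1) : frame σ (aOf σ + 1) ≠ frame σ (aOf σ) + 1 := by
  rw [frame_of_le_aOf σ le_rfl]
  exact frame_aOf_succ_ne hσ

lemma frame_not_adj_sub_cOf (hσ : σ ≠ 1) :
    frame σ (m - cOf σ + 1) ≠ frame σ (m - cOf σ) + 1 := by
  rw [frame_of_sub_cOf_lt σ (Nat.lt_succ_self _)]
  exact fun h => frame_sub_cOf_ne hσ (by omega)

lemma grade_eq_adjCount (hσ : σ ≠ 1) : grade σ = adjCount σ := by
  have hAC := aOf_lt_sub_cOf hσ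
  have hC := cOf_le σ
  -- split the positions `[0, m]` at `a(σ)` and `m - c(σ)`, the two non-adjacencies
  rw [grade, if_neg hσ, bOf_eq_count, adjCount,
    show m + 1 = aOf σ + 1 + (midLen σ - 1) + 1 + cOf σ by unfold midLen; omega,
    Nat.count_add, Nat.count_succ, Nat.count_add, Nat.count_succ,
    if_neg (frame_not_adj_aOf hσ), show aOf σ + 1 + (midLen σ - 1) = m - cOf σ by
      unfold midLen; omega, if_neg (frame_not_adj_sub_cOf hσ),
    Nat.count_of_forall (n := aOf σ) fun j hj => frame_adj_of_lt_aOf σ hj,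
    Nat.count_of_forall (n := cOf σ) fun j _ => frame_adj_of_sub_cOf_lt σ (by omega)]
  omega

lemma grade_one : grade (1 : Perm (Fin m)) = m - 1 := if_pos rfl

end Grade

/-- For every `m ≥ 1`, every `σ ∈ Σ_m` and every `0 ≤ i ≤ m+1`, the doubling map raises
the grade by exactly one: `g(d_i(σ)) = g(σ) + 1`. -/
theorem grade_dbl (m : ℕ) (hm : 1 ≤ m) (σ : Equiv.Perm (Fin m)) (i : ℕ) (hi : i ≤ m + 1) :
    grade (dbl σ i) = grade σ + 1 := by
  have hadj := adjCount_dbl σ hi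
  by_cases hσ : σ = 1
  · subst hσ
    have hτ : dbl (1 : Perm (Fin m)) i = 1 := eq_one_of_adjCount _ (by rw [hadj, adjCount_one])
    rw [hτ, grade_one, grade_one]
    omega
  · have hτ : dbl σ i ≠ 1 := fun h =>
      hσ (eq_one_of_adjCount σ (by rw [h, adjCount_one] at hadj; omega))
    rw [grade_eq_adjCount hτ, grade_eq_adjCount hσ, hadj]

end MarklOps
end

section
/- Let χ ∈ Σ_n be a primitive permutation with n ≥ 2 and let m ≥ 1. A permutation σ ∈ Σ_m satisfies κ(σ) = χ if and only if there exist integers a, c ≥ 0 and m₁,…,m_n ≥ 1 with a + c + m₁ + ⋯ + m_n = m such that σ = id_a × χ⟨m₁,…,m_n⟩ × id_c; moreover, such (a, c, m₁,…,m_n) are uniquely determined by σ. -/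
namespace MarklOps

/-- The set of least elements (class starts) of the equivalence classes of the relation
generated by `s ∼ s+1` whenever `ω(σ)(s+1) = ω(σ)(s)+1` on the middle block of `σ`. -/
noncomputable def startSet {m : ℕ} (σ : Equiv.Perm (Fin m)) : Finset (Fin (midLen σ)) :=
  Finset.univ.filter fun s : Fin (midLen σ) =>
    (s : ℕ) = 0 ∨ ∀ _h : 0 < (s : ℕ),
      (midPerm σ s : ℕ) ≠ (midPerm σ ⟨(s : ℕ) - 1, by have := s.isLt; omega⟩ : ℕ) + 1

/-- The skeleton `κ(σ) ∈ Σ_{m−g(σ)}`, bundled with its arity: `skel σ = ⟨m − g(σ), κ(σ)⟩`.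
It sends `t` to the rank, among the images of all classes ordered by their least elements,
of the image under `ω(σ)` of the `t`-th class (classes ordered by their least elements);
since each class is an interval mapped by `ω(σ)` onto an interval, this is the rank of
`ω(σ)(s_t)` among the values of `ω(σ)` at all class starts, where `s_t` is the `t`-th class
start.  By convention `κ(id_m) = id_1`. -/
noncomputable def skel {m : ℕ} (σ : Equiv.Perm (Fin m)) : Σ n : ℕ, Equiv.Perm (Fin n) :=
  if σ = 1 then ⟨1, 1⟩
  else
    ⟨(startSet σ).card,
      ((startSet σ).orderIsoOfFin rfl).toEquiv.trans
        ((Equiv.ofBijective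
            (fun x : {y // y ∈ startSet σ} =>
              (⟨midPerm σ x.1, Finset.mem_image_of_mem _ x.2⟩ :
                {y // y ∈ (startSet σ).image (fun s => midPerm σ s)}))
            ⟨fun x y hxy => Subtype.ext ((midPerm σ).injective (congrArg Subtype.val hxy)),
             fun y => by
               obtain ⟨x, hx, hxy⟩ := Finset.mem_image.mp y.2
               exact ⟨⟨x, hx⟩, Subtype.ext hxy⟩⟩).trans
          (((startSet σ).image (fun s => midPerm σ s)).orderIsoOfFin
            (Finset.card_image_of_injective _ (midPerm σ).injective)).toEquiv.symm)⟩

/-- `σ = id_a × χ⟨m₁,…,m_n⟩ × id_c`, expressed pointwise, for `x = (a, c, (m₁,…,m_n))`: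
all `m_t ≥ 1`, `a + (m₁+⋯+m_n) + c = m`, `σ` fixes the first `a` and the last `c` points,
and for each `t` and `0 ≤ r < m_t` it sends the input `a + (Σ_{t'<t} m_{t'}) + r` to
`a + (Σ_{t' : χ(t') < χ(t)} m_{t'}) + r`. -/
def IsBlockExpansion {n m : ℕ} (χ : Equiv.Perm (Fin n)) (σ : Equiv.Perm (Fin m))
    (x : ℕ × ℕ × (Fin n → ℕ)) : Prop :=
  (∀ t : Fin n, 1 ≤ x.2.2 t) ∧
  x.1 + (∑ t, x.2.2 t) + x.2.1 = m ∧
  ∀ j : Fin m,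
    ((j : ℕ) < x.1 → σ j = j) ∧
    (x.1 + (∑ t, x.2.2 t) ≤ (j : ℕ) → σ j = j) ∧
    (∀ t : Fin n, ∀ r : ℕ, r < x.2.2 t →
      (j : ℕ) = x.1 + (∑ t' ∈ Finset.univ.filter (fun t' => t' < t), x.2.2 t') + r →
      (σ j : ℕ) = x.1 + (∑ t' ∈ Finset.univ.filter (fun t' => χ t' < χ t), x.2.2 t') + r)

/-!
In the middle block of `σ` (between its fixed prefix and suffix), the skeleton classes are the
maximal runs on which `ω(σ)` increases by steps of `1`. If `σ = id_a × χ⟨m⟩ × id_c`, the blocks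
of `χ⟨m⟩` are such runs; primitivity of `χ` says that no two consecutive blocks merge into one
run and that `χ` moves its first and last points, which forces `a(σ) = a` and `c(σ) = c`. Hence
the class starts are the block starts, `κ(σ) = χ`, and `(a, c, m)` is read off from `σ`.
Conversely, if `κ(σ) = χ`, the classes are carried by translations onto disjoint intervals tiling
the middle block, in the order given by `χ`; so each one lands at the total length of the classes
that `χ` puts before it, which says that `σ` is the block expansion of `χ` by the class lengths.
-/

open Finset Function

section BlockStart

variable {n : ℕ} (e : Equiv.Perm (Fin n)) (w : Fin n → ℕ)

/-- `blockStart 1 w t` and `blockStart χ w t` are where the `t`-th block of `χ⟨w⟩` starts in its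
domain and in its range. -/
def blockStart (t : Fin n) : ℕ :=
  ∑ t' ∈ univ.filter (fun t' => e t' < e t), w t'

variable {e w}

lemma blockStart_one (t : Fin n) :
    blockStart 1 w t = ∑ t' ∈ univ.filter (fun t' => t' < t), w t' := rfl

lemma blockStart_eq_zero {t : Fin n} (ht : (e t : ℕ) = 0) : blockStart e w t = 0 :=
  sum_eq_zero fun t' ht' => by simp only [mem_filter, Fin.lt_def] at ht'; omega

lemma blockStart_add_self (t : Fin n) :
    blockStart e w t + w t = ∑ t' ∈ univ.filter (fun t' => e t' ≤ e t), w t' := by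
  rw [blockStart, add_comm, ← sum_insert (s := univ.filter _) (by simp)]
  congr 1
  ext t'
  simp [le_iff_lt_or_eq, or_comm]

lemma blockStart_mono {t u : Fin n} (h : e t ≤ e u) : blockStart e w t ≤ blockStart e w u :=
  sum_le_sum_of_subset fun t' => by simp only [mem_filter, mem_univ, true_and]; exact (·.trans_le h)

lemma blockStart_add_le_blockStart {t u : Fin n} (h : e t < e u) :
    blockStart e w t + w t ≤ blockStart e w u := by
  rw [blockStart_add_self]
  exact sum_le_sum_of_subset fun t' => by
    simp only [mem_filter, mem_univ, true_and]; exact (·.trans_lt h)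

lemma blockStart_add_le_sum (t : Fin n) : blockStart e w t + w t ≤ ∑ t', w t' := by
  rw [blockStart_add_self]
  exact sum_le_sum_of_subset (subset_univ _)

lemma blockStart_add_lt_sum {t : Fin n} {r : ℕ} (hr : r < w t) :
    blockStart e w t + r < ∑ t', w t' :=
  (Nat.add_lt_add_left hr _).trans_le (blockStart_add_le_sum t)

lemma blockStart_add_eq_sum {t : Fin n} (ht : (e t : ℕ) + 1 = n) :
    blockStart e w t + w t = ∑ t', w t' := by
  rw [blockStart_add_self, filter_true_of_mem fun t' _ => Fin.le_def.2 (by omega)]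

lemma blockStart_eq_add_of_succ {t u : Fin n} (h : (e u : ℕ) = e t + 1) :
    blockStart e w u = blockStart e w t + w t := by
  rw [blockStart_add_self, blockStart]
  congr 1
  ext t'
  simp only [mem_filter, mem_univ, true_and, Fin.lt_def, Fin.le_def]
  omega

lemma blockStart_lt_blockStart_iff (hw : ∀ t, 0 < w t) {t u : Fin n} :
    blockStart e w t < blockStart e w u ↔ e t < e u := by
  refine ⟨fun h => lt_of_not_ge fun h' => h.not_ge (blockStart_mono h'), fun h => ?_⟩
  have := blockStart_add_le_blockStart (w := w) h
  have := hw t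
  omega

lemma strictMono_blockStart_one (hw : ∀ t, 0 < w t) : StrictMono (blockStart 1 w) :=
  fun _ _ htu => (blockStart_lt_blockStart_iff hw).2 htu

lemma blockStart_eq_blockStart_add_iff (hw : ∀ t, 0 < w t) {t u : Fin n} :
    blockStart e w u = blockStart e w t + w t ↔ (e u : ℕ) = e t + 1 := by
  refine ⟨fun h => ?_, blockStart_eq_add_of_succ⟩
  by_contra hne
  rcases le_or_gt (e u) (e t) with hle | hlt
  · have := blockStart_mono (w := w) hle
    have := hw t
    omega
  · -- the block ranked just after `t` sits strictly between `t` and `u`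
    set v := e.symm ⟨e t + 1, by omega⟩
    have hv : (e v : ℕ) = e t + 1 := by simp [v]
    have h1 := blockStart_add_le_blockStart (w := w) (show e t < e v by simp [Fin.lt_def, hv])
    have h2 := blockStart_add_le_blockStart (w := w) (show e v < e u by
      simp only [Fin.lt_def, hv] at hlt ⊢; omega)
    have := hw v
    omega

lemma eq_of_blockStart_add_eq {t u : Fin n} {r r' : ℕ} (hr : r < w t) (hr' : r' < w u)
    (h : blockStart e w t + r = blockStart e w u + r') : t = u := by
  rcases lt_trichotomy (e t) (e u) with hlt | heq | hlt
  · have := blockStart_add_le_blockStart (w := w) hlt; omega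
  · exact e.injective heq
  · have := blockStart_add_le_blockStart (w := w) hlt; omega

lemma exists_eq_blockStart_add {p : ℕ} (hp : p < ∑ t, w t) :
    ∃ t, ∃ r < w t, p = blockStart e w t + r := by
  let f : (Σ t, Fin (w t)) → Fin (∑ t, w t) := fun x =>
    ⟨blockStart e w x.1 + x.2, blockStart_add_lt_sum x.2.isLt⟩
  have hf : Function.Injective f := by
    rintro ⟨t, r⟩ ⟨u, r'⟩ h
    have h' : blockStart e w t + r = blockStart e w u + r' := congrArg Fin.val h
    obtain rfl := eq_of_blockStart_add_eq r.isLt r'.isLt h'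
    obtain rfl : r = r' := Fin.ext (by omega)
    rfl
  obtain ⟨⟨t, r⟩, h⟩ := ((Fintype.bijective_iff_injective_and_card f).2
    ⟨hf, by simp⟩).2 ⟨p, hp⟩
  exact ⟨t, r, r.isLt, (congrArg Fin.val h).symm⟩

lemma eq_of_blockStart_eq {w' : Fin n → ℕ} (h : ∀ t, blockStart e w t = blockStart e w' t)
    (hsum : ∑ t, w t = ∑ t, w' t) : w = w' := by
  funext t
  by_cases ht : (e t : ℕ) + 1 < n
  · set u := e.symm ⟨e t + 1, ht⟩
    have hu : (e u : ℕ) = e t + 1 := by simp [u]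
    have := blockStart_eq_add_of_succ (w := w) hu
    have := blockStart_eq_add_of_succ (w := w') hu
    have := h t
    have := h u
    omega
  · have hlast : (e t : ℕ) + 1 = n := by have := (e t).isLt; omega
    have := blockStart_add_eq_sum (w := w) hlast
    have := blockStart_add_eq_sum (w := w') hlast
    have := h t
    omega

end BlockStart

section Gaps

variable {n : ℕ} {S : Fin n → ℕ} {L : ℕ}

def gaps (S : Fin n → ℕ) (L : ℕ) (t : Fin n) : ℕ :=
  (if h : (t : ℕ) + 1 < n then S ⟨t + 1, h⟩ else L) - S t

lemma gaps_pos (hS : StrictMono S) (hSL : ∀ t, S t < L) (t : Fin n) : 0 < gaps S L t := by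
  unfold gaps
  split_ifs with h
  · have := hS (show t < ⟨t + 1, h⟩ from Fin.lt_def.2 (by simp)); omega
  · have := hSL t; omega

lemma blockStart_one_gaps (hS : StrictMono S) (h0 : ∀ h : 0 < n, S ⟨0, h⟩ = 0) (t : Fin n) :
    blockStart 1 (gaps S L) t = S t := by
  obtain ⟨k, hk⟩ := t
  induction k with
  | zero => rw [blockStart_eq_zero rfl, h0]
  | succ k ih =>
    rw [blockStart_eq_add_of_succ (t := ⟨k, by omega⟩) rfl, ih (by omega), gaps, dif_pos hk]
    dsimp only
    have := hS (show (⟨k, by omega⟩ : Fin n) < ⟨k + 1, hk⟩ from Fin.lt_def.2 (by simp))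
    omega

lemma sum_gaps (hS : StrictMono S) (hSL : ∀ t, S t < L) (h0 : ∀ h : 0 < n, S ⟨0, h⟩ = 0)
    (hn : 0 < n) : ∑ t, gaps S L t = L := by
  have hlast : ((1 : Equiv.Perm (Fin n)) ⟨n - 1, by omega⟩ : ℕ) + 1 = n := by simp; omega
  rw [← blockStart_add_eq_sum hlast, blockStart_one_gaps hS h0, gaps, dif_neg (by simp; omega)]
  have := hSL ⟨n - 1, by omega⟩
  omega

end Gaps

section Packing

variable {ι : Type*} {Q w : ι → ℕ}

lemma sum_le_card_of_pairwiseDisjoint_Ico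
    (hdisj : Pairwise (Disjoint on fun i => Ico (Q i) (Q i + w i)))
    (s : Finset ι) (T : Finset ℕ) (hsub : ∀ i ∈ s, Ico (Q i) (Q i + w i) ⊆ T) :
    ∑ i ∈ s, w i ≤ #T :=
  calc ∑ i ∈ s, w i = ∑ i ∈ s, #(Ico (Q i) (Q i + w i)) := by simp
    _ = #(s.biUnion fun i => Ico (Q i) (Q i + w i)) :=
        (card_biUnion (hdisj.set_pairwise _)).symm
    _ ≤ #T := card_le_card (biUnion_subset.2 hsub)

lemma eq_sum_of_pairwiseDisjoint_Ico [Fintype ι] (hw : ∀ i, 0 < w i)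
    (hdisj : Pairwise (Disjoint on fun i => Ico (Q i) (Q i + w i)))
    (hle : ∀ i, Q i + w i ≤ ∑ i, w i) (t : ι) :
    Q t = ∑ i ∈ univ.filter (fun i => Q i < Q t), w i := by
  -- the intervals left of `Q t` fit into `[0, Q t)` and the others into `[Q t, ∑ w)`; both
  -- bounds are equalities since the lengths add up to `∑ w`
  have hleft := sum_le_card_of_pairwiseDisjoint_Ico hdisj (univ.filter fun i => Q i < Q t)
    (range (Q t)) fun i hi => by
      simp only [mem_filter, mem_univ, true_and] at hi
      have : Q i + w i ≤ Q t := by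
        by_contra h
        have hne : i ≠ t := by rintro rfl; omega
        exact disjoint_left.1 (hdisj hne) (show Q t ∈ Ico (Q i) (Q i + w i) by simp; omega)
          (by simp [hw t])
      intro v
      simp only [mem_Ico, mem_range]
      omega
  have hright := sum_le_card_of_pairwiseDisjoint_Ico hdisj (univ.filter fun i => ¬ Q i < Q t)
    (Ico (Q t) (∑ i, w i)) fun i hi => by
      simp only [mem_filter, mem_univ, true_and] at hi
      have := hle i
      intro v
      simp only [mem_Ico]
      omega
  have htotal := sum_filter_add_sum_filter_not univ (fun i => Q i < Q t) w
  have := hle t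
  simp only [card_range, Nat.card_Ico] at hleft hright
  omega

end Packing

section Runs

variable {L : ℕ} (ω : Equiv.Perm (Fin L))

def runStarts : Finset (Fin L) :=
  univ.filter fun p => ∀ q : Fin L, (q : ℕ) + 1 = p → (ω p : ℕ) ≠ ω q + 1

variable {ω}

lemma mem_runStarts {p : Fin L} :
    p ∈ runStarts ω ↔ ∀ q : Fin L, (q : ℕ) + 1 = p → (ω p : ℕ) ≠ ω q + 1 := by
  simp [runStarts]

lemma zero_mem_runStarts (hL : 0 < L) : (⟨0, hL⟩ : Fin L) ∈ runStarts ω :=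
  mem_runStarts.2 fun _ h => absurd h (by simp)

lemma apply_eq_add_of_notMem_runStarts {p : Fin L} :
    ∀ (d : ℕ) (q : Fin L), (q : ℕ) = p + d → (∀ s : Fin L, p < s → s ≤ q → s ∉ runStarts ω) →
      (ω q : ℕ) = ω p + d
  | 0, q, hq, _ => by rw [show q = p from Fin.ext (by simpa using hq)]; rfl
  | d + 1, q, hq, hrun => by
    have hq' := hrun q (Fin.lt_def.2 (by omega)) le_rfl
    simp only [mem_runStarts, not_forall, not_not] at hq'
    obtain ⟨q', hq'q, hω⟩ := hq'
    rw [hω, apply_eq_add_of_notMem_runStarts d q' (by omega)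
      fun s hps hsq => hrun s hps (hsq.trans (Fin.le_def.2 (by omega)))]
    omega

end Runs

section Expansion

variable {n L : ℕ} (χ : Equiv.Perm (Fin n)) (w : Fin n → ℕ) (ω : Equiv.Perm (Fin L))

/-- `ω = χ⟨w⟩` (given `∑ t, w t = L`). -/
def IsExpansion : Prop :=
  ∀ p : Fin L, ∀ t : Fin n, ∀ r < w t, (p : ℕ) = blockStart 1 w t + r →
    (ω p : ℕ) = blockStart χ w t + r

variable {χ w ω}

lemma IsExpansion.mem_runStarts_iff (h : IsExpansion χ w ω) (hw : ∀ t, 0 < w t)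
    (hL : ∑ t, w t = L) (hχ : ∀ t u : Fin n, (u : ℕ) = t + 1 → (χ u : ℕ) ≠ χ t + 1)
    (p : Fin L) : p ∈ runStarts ω ↔ ∃ t, (p : ℕ) = blockStart 1 w t := by
  rw [mem_runStarts]
  obtain ⟨t, r, hr, hp⟩ := exists_eq_blockStart_add (e := 1) (w := w) (p := p) (hL ▸ p.isLt)
  constructor
  · intro hstart
    refine ⟨t, ?_⟩
    by_contra hr0
    exact hstart ⟨p - 1, by omega⟩ (by simp; omega) <| by
      rw [h p t r hr hp, h _ t (r - 1) (by omega) (by simp; omega)]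
      omega
  · rintro ⟨u, hu⟩ q hqp hω
    obtain ⟨v, r', hr', hq⟩ := exists_eq_blockStart_add (e := 1) (w := w) (p := q) (hL ▸ q.isLt)
    -- `q` must be the last point of the block `v` just before `u`
    have hlast : r' + 1 = w v := by
      by_contra hne
      obtain rfl : v = u := eq_of_blockStart_add_eq (e := 1) (r := r' + 1) (r' := 0) (by omega)
        (hw u) (by omega)
      omega
    have hvu := (blockStart_eq_blockStart_add_iff (e := 1) (t := v) (u := u) hw).1
      (by omega : _ = _)
    rw [h p u 0 (hw u) (by omega), h q v r' hr' hq] at hω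
    exact hχ v u (by simpa using hvu)
      ((blockStart_eq_blockStart_add_iff (e := χ) (t := v) (u := u) hw).1 (by omega))

lemma IsExpansion.range_blockStart (h : IsExpansion χ w ω) (hw : ∀ t, 0 < w t)
    (hL : ∑ t, w t = L) (hχ : ∀ t u : Fin n, (u : ℕ) = t + 1 → (χ u : ℕ) ≠ χ t + 1) :
    Set.range (blockStart 1 w) = Fin.val '' (runStarts ω : Set (Fin L)) := by
  ext v
  constructor
  · rintro ⟨t, rfl⟩
    exact ⟨⟨_, hL ▸ blockStart_add_lt_sum (hw t)⟩, (h.mem_runStarts_iff hw hL hχ _).2 ⟨t, rfl⟩, rfl⟩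
  · rintro ⟨p, hp, rfl⟩
    obtain ⟨t, ht⟩ := (h.mem_runStarts_iff hw hL hχ p).1 hp
    exact ⟨t, ht.symm⟩

lemma IsExpansion.unique {w' : Fin n → ℕ} (h : IsExpansion χ w ω) (h' : IsExpansion χ w' ω)
    (hw : ∀ t, 0 < w t) (hw' : ∀ t, 0 < w' t) (hL : ∑ t, w t = L) (hL' : ∑ t, w' t = L)
    (hχ : ∀ t u : Fin n, (u : ℕ) = t + 1 → (χ u : ℕ) ≠ χ t + 1) : w = w' := by
  have hstart : blockStart 1 w = blockStart 1 w' :=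
    ((strictMono_blockStart_one hw).range_inj (strictMono_blockStart_one hw')).1 <| by
      rw [h.range_blockStart hw hL hχ, h'.range_blockStart hw' hL' hχ]
  exact eq_of_blockStart_eq (congrFun hstart) (hL.trans hL'.symm)

lemma val_apply_blockStart_add (hw : ∀ t, 0 < w t)
    (hrange : ∀ p ∈ runStarts ω, ∃ t, (p : ℕ) = blockStart 1 w t)
    {t : Fin n} {r : ℕ} (hr : r < w t) {p q : Fin L} (hp : (p : ℕ) = blockStart 1 w t)
    (hq : (q : ℕ) = blockStart 1 w t + r) : (ω q : ℕ) = ω p + r := by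
  refine apply_eq_add_of_notMem_runStarts r q (by omega) fun s hps hsq hs => ?_
  obtain ⟨u, hu⟩ := hrange s hs
  rw [Fin.lt_def] at hps
  rw [Fin.le_def] at hsq
  obtain rfl := eq_of_blockStart_add_eq (e := 1) (r := s - p) (r' := 0) (by omega) (hw u)
    (show blockStart 1 w t + (s - p) = blockStart 1 w u + 0 by omega)
  omega

/-- Inside each block `ω` is a translation, so by injectivity of `ω` the blocks land on disjoint
intervals tiling `[0, L)`, in the order given by `χ`. -/
lemma isExpansion_of_runStarts (hw : ∀ t, 0 < w t) (hL : ∑ t, w t = L)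
    (hrange : ∀ p ∈ runStarts ω, ∃ t, (p : ℕ) = blockStart 1 w t) (S : Fin n → Fin L)
    (hS : ∀ t, (S t : ℕ) = blockStart 1 w t) (hord : ∀ t u, χ t < χ u ↔ ω (S t) < ω (S u)) :
    IsExpansion χ w ω := by
  have hrun : ∀ t, ∀ r (hr : r < w t),
      (ω ⟨_, hL ▸ blockStart_add_lt_sum (e := 1) hr⟩ : ℕ) = ω (S t) + r :=
    fun t r hr => val_apply_blockStart_add hw hrange hr (hS t) rfl
  have hdisj : Pairwise (Disjoint on fun t => Ico (ω (S t) : ℕ) (ω (S t) + w t)) :=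
    fun t u htu => disjoint_left.2 fun v hvt hvu => htu <| by
      simp only [mem_Ico] at hvt hvu
      have hr : v - ω (S t) < w t := by omega
      have hr' : v - ω (S u) < w u := by omega
      have := congrArg Fin.val <| ω.injective <| Fin.ext <|
        (hrun t _ hr).trans ((by omega : _ = _).trans (hrun u _ hr').symm)
      exact eq_of_blockStart_add_eq (e := 1) hr hr' this
  have hfit : ∀ t, (ω (S t) : ℕ) + w t ≤ ∑ t, w t := fun t => by
    have hr : w t - 1 < w t := by have := hw t; omega
    have := hrun t _ hr
    have := (ω ⟨_, hL ▸ blockStart_add_lt_sum (e := 1) hr⟩).isLt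
    omega
  intro p t r hr hp
  rw [val_apply_blockStart_add hw hrange hr (hS t) hp,
    eq_sum_of_pairwiseDisjoint_Ico hw hdisj hfit t, blockStart]
  congr 2
  ext u
  simp only [mem_filter, mem_univ, true_and]
  rw [hord, Fin.lt_def]

lemma exists_isExpansion (S : Fin n → Fin L) (hS : StrictMono S)
    (hrange : ∀ p, p ∈ runStarts ω ↔ ∃ t, S t = p)
    (hord : ∀ t u, χ t < χ u ↔ ω (S t) < ω (S u)) :
    ∃ w : Fin n → ℕ, (∀ t, 0 < w t) ∧ ∑ t, w t = L ∧ IsExpansion χ w ω := by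
  set s : Fin n → ℕ := fun t => S t
  have hs : StrictMono s := fun _ _ h => hS h
  have h0 : ∀ h : 0 < n, s ⟨0, h⟩ = 0 := fun h => by
    obtain ⟨t, ht⟩ := (hrange _).1 (zero_mem_runStarts (ω := ω) (S ⟨0, h⟩).pos)
    have := hS.monotone (show (⟨0, h⟩ : Fin n) ≤ t from Fin.le_def.2 (Nat.zero_le _))
    rw [ht, Fin.le_def] at this
    exact Nat.le_zero.1 this
  have hw : ∀ t, 0 < gaps s L t := gaps_pos hs fun t => (S t).isLt
  have hB : ∀ t, blockStart 1 (gaps s L) t = S t := blockStart_one_gaps hs h0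
  have hL : ∑ t, gaps s L t = L := by
    rcases Nat.eq_zero_or_pos n with rfl | hn
    · rcases Nat.eq_zero_or_pos L with rfl | hL
      · simp
      · exact absurd ((hrange _).1 (zero_mem_runStarts hL)) (by simp)
    · exact sum_gaps hs (fun t => (S t).isLt) h0 hn
  refine ⟨_, hw, hL, isExpansion_of_runStarts hw hL (fun p hp => ?_) S (fun t => (hB t).symm) hord⟩
  obtain ⟨t, rfl⟩ := (hrange p).1 hp
  exact ⟨t, (hB t).symm⟩

end Expansion

section Middle

variable {m : ℕ} {σ : Equiv.Perm (Fin m)}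

lemma startSet_eq_runStarts (σ : Equiv.Perm (Fin m)) : startSet σ = runStarts (midPerm σ) := by
  ext p
  simp only [startSet, mem_filter, mem_univ, true_and, mem_runStarts]
  constructor
  · rintro (hp | hp) q hq
    · omega
    · rw [show q = ⟨p - 1, by omega⟩ from Fin.ext (show (q : ℕ) = p - 1 by omega)]
      exact hp (by omega)
  · exact fun hp => or_iff_not_imp_left.2 fun _ _ => hp _ (show (p : ℕ) - 1 + 1 = p by omega)

lemma val_apply_eq_aOf_add_midPerm (σ : Equiv.Perm (Fin m)) {j : Fin m}
    {p : Fin (midLen σ)} (hj : (j : ℕ) = aOf σ + p) :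
    (σ j : ℕ) = aOf σ + midPerm σ p := by
  have hp := p.isLt
  unfold midLen at hp
  have := mid_mem σ j (by omega)
  rw [show j = ⟨aOf σ + p, by omega⟩ from Fin.ext hj] at this ⊢
  change _ = aOf σ + ((σ ⟨aOf σ + p, _⟩ : ℕ) - aOf σ)
  omega

lemma aOf_add_cOf_lt (hσ : σ ≠ 1) : aOf σ + cOf σ < m := by
  by_contra h
  refine hσ (Equiv.ext fun j => ?_)
  rcases lt_or_ge (j : ℕ) (aOf σ) with hj | hj
  · exact fix_low σ j hj
  · exact fix_high σ j (by omega)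

lemma midLen_one : midLen (1 : Equiv.Perm (Fin m)) = 0 := by
  have : aOf (1 : Equiv.Perm (Fin m)) = m := Nat.findGreatest_eq fun _ _ => rfl
  simp [midLen, this]

lemma aOf_eq_of_forall {a : ℕ} (ha : a ≤ m) (hfix : ∀ j : Fin m, (j : ℕ) < a → σ j = j)
    (hmove : ∀ j : Fin m, (j : ℕ) = a → σ j ≠ j) : aOf σ = a := by
  refine le_antisymm (not_lt.1 fun h => ?_) (Nat.le_findGreatest ha hfix)
  have ham : a < m := h.trans_le (Nat.findGreatest_le m)
  exact hmove ⟨a, ham⟩ rfl (fix_low σ _ h)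

lemma cOf_eq_of_forall {c : ℕ} (hc : c ≤ m) (hfix : ∀ j : Fin m, m - c ≤ (j : ℕ) → σ j = j)
    (hmove : ∀ j : Fin m, (j : ℕ) + 1 = m - c → σ j ≠ j) : cOf σ = c := by
  refine le_antisymm (not_lt.1 fun h => ?_) (Nat.le_findGreatest hc hfix)
  have hcm : c < m := h.trans_le (Nat.findGreatest_le m)
  exact hmove ⟨m - c - 1, by omega⟩ (by simp; omega) (fix_high σ _ (by simp; omega))

end Middle

section Primitive

variable {n : ℕ} {χ : Equiv.Perm (Fin n)}

lemma aOf_bOf_cOf_eq_zero (hn : 2 ≤ n) (hχ : grade χ = 0) :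
    aOf χ = 0 ∧ bOf χ = 0 ∧ cOf χ = 0 := by
  have hχ1 : χ ≠ 1 := by rintro rfl; simp [grade] at hχ; omega
  rw [grade, if_neg hχ1] at hχ
  omega

lemma val_apply_zero_ne_zero (hχ : aOf χ = 0) (hn : 0 < n) : (χ ⟨0, hn⟩ : ℕ) ≠ 0 := by
  intro h
  have : 1 ≤ aOf χ := Nat.le_findGreatest hn fun j hj => by
    rw [show j = ⟨0, hn⟩ from Fin.ext (show (j : ℕ) = 0 by omega)]
    exact Fin.ext h
  omega

lemma val_apply_last_ne (hχ : cOf χ = 0) (hn : 0 < n) :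
    (χ ⟨n - 1, by omega⟩ : ℕ) ≠ n - 1 := by
  intro h
  have : 1 ≤ cOf χ := Nat.le_findGreatest hn fun j hj => by
    rw [show j = ⟨n - 1, by omega⟩ from Fin.ext (show (j : ℕ) = n - 1 by omega)]
    exact Fin.ext h
  omega

lemma val_apply_succ_ne (ha : aOf χ = 0) (hb : bOf χ = 0) (hc : cOf χ = 0) (t u : Fin n)
    (hu : (u : ℕ) = t + 1) : (χ u : ℕ) ≠ χ t + 1 := by
  have hmid : midLen χ = n := by simp [midLen, ha, hc]
  have hval : ∀ p : Fin n, (χ p : ℕ) = midPerm χ ⟨p, by omega⟩ := fun p => by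
    rw [val_apply_eq_aOf_add_midPerm χ (p := ⟨p, by omega⟩) (by simp [ha]), ha, zero_add]
  intro h
  refine eq_empty_iff_forall_notMem.1 (card_eq_zero.1 hb) ⟨t, by omega⟩ ?_
  simp only [mem_filter, mem_univ, true_and]
  refine ⟨by omega, ?_⟩
  rw [← hval t, ← h, hval u]
  exact congrArg _ (congrArg _ (Fin.ext hu.symm))

end Primitive

section Skeleton

variable {m n : ℕ} {σ : Equiv.Perm (Fin m)} {χ : Equiv.Perm (Fin n)}

lemma eq_of_lt_iff_lt {k : ℕ} {π χ : Equiv.Perm (Fin k)} (h : ∀ t u, π t < π u ↔ χ t < χ u) :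
    π = χ := by
  have hmono : StrictMono (π ∘ χ.symm) := fun a b hab => by
    simpa [h] using hab
  ext t
  simpa using congrArg Fin.val (hmono.apply_eq (x := χ t))

lemma exists_skel_eq_lt_iff (hσ : σ ≠ 1) :
    ∃ π : Equiv.Perm (Fin (startSet σ).card), skel σ = ⟨_, π⟩ ∧ ∀ t u,
      π t < π u ↔ midPerm σ ((startSet σ).orderEmbOfFin rfl t) <
        midPerm σ ((startSet σ).orderEmbOfFin rfl u) := by
  rw [skel, if_neg hσ]
  refine ⟨_, rfl, fun t u => ?_⟩
  exact (((startSet σ).image (midPerm σ)).orderIsoOfFin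
    (card_image_of_injective _ (midPerm σ).injective)).symm.lt_iff_lt

lemma skel_eq_iff (hσ : σ ≠ 1) :
    skel σ = ⟨n, χ⟩ ↔ ∃ S : Fin n → Fin (midLen σ), StrictMono S ∧
      (∀ p, p ∈ startSet σ ↔ ∃ t, S t = p) ∧
      ∀ t u, χ t < χ u ↔ midPerm σ (S t) < midPerm σ (S u) := by
  obtain ⟨π, hskel, hπ⟩ := exists_skel_eq_lt_iff hσ
  rw [hskel]
  constructor
  · rintro h
    obtain ⟨rfl, h⟩ := Sigma.mk.inj_iff.1 h
    obtain rfl := eq_of_heq h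
    refine ⟨_, ((startSet σ).orderEmbOfFin rfl).strictMono, fun p => ⟨fun hp => ?_, ?_⟩, hπ⟩
    · obtain ⟨t, ht⟩ := (Set.ext_iff.1 (range_orderEmbOfFin (startSet σ) rfl) p).2 hp
      exact ⟨t, ht⟩
    · rintro ⟨t, rfl⟩
      exact orderEmbOfFin_mem _ _ _
  · rintro ⟨S, hS, hrange, hord⟩
    have hcard : (startSet σ).card = n := by
      rw [← card_fin n, ← card_image_of_injective univ hS.injective]
      congr 1
      ext p
      simp [hrange]
    subst hcard
    have hSeq : S = (startSet σ).orderEmbOfFin rfl :=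
      orderEmbOfFin_unique rfl (fun t => (hrange _).2 ⟨t, rfl⟩) hS
    subst hSeq
    rw [eq_of_lt_iff_lt fun t u => (hπ t u).trans (hord t u).symm]

end Skeleton

section BlockExpansion

variable {m n : ℕ} {σ : Equiv.Perm (Fin m)} {χ : Equiv.Perm (Fin n)}

lemma isBlockExpansion_of_isExpansion (hσ : σ ≠ 1) {w : Fin n → ℕ} (hw : ∀ t, 0 < w t)
    (hL : ∑ t, w t = midLen σ) (h : IsExpansion χ w (midPerm σ)) :
    IsBlockExpansion χ σ (aOf σ, cOf σ, w) := by
  have hac := aOf_add_cOf_lt hσ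
  have hmid : midLen σ = m - aOf σ - cOf σ := rfl
  refine ⟨hw, by dsimp only; omega, fun j => ⟨fix_low σ j, fun hj => fix_high σ j (by
    dsimp only at hj; omega), fun t r hr hj => ?_⟩⟩
  rw [← blockStart_one] at hj
  have hp : blockStart 1 w t + r < midLen σ := hL ▸ blockStart_add_lt_sum hr
  rw [val_apply_eq_aOf_add_midPerm σ (p := ⟨_, hp⟩) (by simp only at hj ⊢; omega),
    h _ t r hr rfl]
  exact (add_assoc _ _ _).symm

lemma exists_isBlockExpansion_of_skel_eq (hn : n ≠ 1) (h : skel σ = ⟨n, χ⟩) :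
    ∃ x, IsBlockExpansion χ σ x := by
  have hσ : σ ≠ 1 := by
    rintro rfl
    rw [skel, if_pos rfl] at h
    exact hn (congrArg Sigma.fst h).symm
  obtain ⟨S, hS, hrange, hord⟩ := (skel_eq_iff hσ).1 h
  rw [startSet_eq_runStarts] at hrange
  obtain ⟨w, hw, hL, hexp⟩ := exists_isExpansion S hS hrange hord
  exact ⟨_, isBlockExpansion_of_isExpansion hσ hw hL hexp⟩

namespace IsBlockExpansion

variable {x : ℕ × ℕ × (Fin n → ℕ)}

lemma aOf_eq (hx : IsBlockExpansion χ σ x) (hn : 0 < n) (hχ : aOf χ = 0) : aOf σ = x.1 := by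
  obtain ⟨hw, hsum, hpt⟩ := hx
  refine aOf_eq_of_forall (by omega) (fun j => (hpt j).1) fun j hj hfix => ?_
  have hσj := (hpt j).2.2 ⟨0, hn⟩ 0 (hw _) (by rw [← blockStart_one, blockStart_eq_zero rfl]; omega)
  change _ = _ + blockStart χ x.2.2 _ + 0 at hσj
  -- the block sent to the front is not the first one, so the first one moves
  have := blockStart_add_le_blockStart (w := x.2.2) (t := χ.symm ⟨0, hn⟩) (u := ⟨0, hn⟩)
    (by
      rw [Equiv.apply_symm_apply, Fin.lt_def]
      exact Nat.pos_of_ne_zero (val_apply_zero_ne_zero hχ hn))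
  have := hw (χ.symm ⟨0, hn⟩)
  rw [hfix] at hσj
  omega

lemma cOf_eq (hx : IsBlockExpansion χ σ x) (hn : 0 < n) (hχ : cOf χ = 0) : cOf σ = x.2.1 := by
  obtain ⟨hw, hsum, hpt⟩ := hx
  set w := x.2.2
  set last : Fin n := ⟨n - 1, by omega⟩
  have hlast := blockStart_add_eq_sum (e := 1) (w := w) (t := last) (by simp [last]; omega)
  refine cOf_eq_of_forall (by omega) (fun j hj => (hpt j).2.1 (by omega)) fun j hj hfix => ?_
  have hσj := (hpt j).2.2 last (w last - 1) (by have := hw last; omega)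
    (by rw [← blockStart_one]; have := hw last; omega)
  change _ = _ + blockStart χ w _ + _ at hσj
  -- the block sent to the back is not the last one, so the last one moves
  have := blockStart_add_le_blockStart (w := w) (t := last) (u := χ.symm ⟨n - 1, by omega⟩)
    (by
      have : (χ last : ℕ) ≠ n - 1 := val_apply_last_ne hχ hn
      have := (χ last).isLt
      rw [Equiv.apply_symm_apply, Fin.lt_def]
      dsimp only
      omega)
  have := blockStart_add_lt_sum (e := χ) (hw (χ.symm ⟨n - 1, by omega⟩))
  have := hw last
  rw [hfix] at hσj
  omega

lemma sum_eq_midLen (hx : IsBlockExpansion χ σ x) (ha : aOf σ = x.1) (hc : cOf σ = x.2.1) :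
    ∑ t, x.2.2 t = midLen σ := by
  have := hx.2.1
  unfold midLen
  omega

lemma isExpansion (hx : IsBlockExpansion χ σ x) (ha : aOf σ = x.1) :
    IsExpansion χ x.2.2 (midPerm σ) := by
  intro p t r hr hp
  obtain ⟨hw, hsum, hpt⟩ := hx
  have hlt := p.isLt
  unfold midLen at hlt
  have hj : aOf σ + p < m := by omega
  have := (hpt ⟨_, hj⟩).2.2 t r hr (by rw [← blockStart_one]; simp only; omega)
  rw [val_apply_eq_aOf_add_midPerm σ rfl] at this
  change _ = _ + blockStart χ _ _ + _ at this
  omega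

lemma skel_eq (hx : IsBlockExpansion χ σ x) (hn : 2 ≤ n) (hχ : grade χ = 0) :
    skel σ = ⟨n, χ⟩ := by
  obtain ⟨ha, hb, hc⟩ := aOf_bOf_cOf_eq_zero hn hχ
  have haσ := hx.aOf_eq (by omega) ha
  have hL := hx.sum_eq_midLen haσ (hx.cOf_eq (by omega) hc)
  have hexp := hx.isExpansion haσ
  have hw : ∀ t, 0 < x.2.2 t := hx.1
  have hσ : σ ≠ 1 := by
    rintro rfl
    have := blockStart_add_lt_sum (e := 1) (hw ⟨0, by omega⟩)
    rw [hL, midLen_one] at this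
    omega
  let S : Fin n → Fin (midLen σ) := fun t =>
    ⟨blockStart 1 x.2.2 t, hL ▸ (add_zero _).symm.trans_lt (blockStart_add_lt_sum (hw t))⟩
  have hωS : ∀ t, (midPerm σ (S t) : ℕ) = blockStart χ x.2.2 t + 0 := fun t =>
    hexp (S t) t 0 (hw t) rfl
  refine (skel_eq_iff hσ).2 ⟨S, fun t u htu => strictMono_blockStart_one hw htu, fun p => ?_,
    fun t u => ?_⟩
  · rw [startSet_eq_runStarts, hexp.mem_runStarts_iff hw hL (val_apply_succ_ne ha hb hc)]
    simp only [S, Fin.ext_iff, eq_comm]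
  · rw [← blockStart_lt_blockStart_iff hw, Fin.lt_def, hωS, hωS, add_zero, add_zero]

lemma unique {y : ℕ × ℕ × (Fin n → ℕ)} (hx : IsBlockExpansion χ σ x)
    (hy : IsBlockExpansion χ σ y) (hn : 2 ≤ n) (hχ : grade χ = 0) : x = y := by
  obtain ⟨ha, hb, hc⟩ := aOf_bOf_cOf_eq_zero hn hχ
  have hxa := hx.aOf_eq (by omega) ha
  have hya := hy.aOf_eq (by omega) ha
  have hxc := hx.cOf_eq (by omega) hc
  have hyc := hy.cOf_eq (by omega) hc
  have hw := (hx.isExpansion hxa).unique (hy.isExpansion hya) hx.1 hy.1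
    (hx.sum_eq_midLen hxa hxc) (hy.sum_eq_midLen hya hyc) (val_apply_succ_ne ha hb hc)
  exact Prod.ext (hxa.symm.trans hya) (Prod.ext (hxc.symm.trans hyc) hw)

end IsBlockExpansion

end BlockExpansion

theorem skel_eq_iff_block_expansion_general (n : ℕ) (hn : 2 ≤ n) (χ : Equiv.Perm (Fin n))
    (hχ : grade χ = 0) (m : ℕ) (σ : Equiv.Perm (Fin m)) :
    (skel σ = ⟨n, χ⟩ ↔ ∃ x : ℕ × ℕ × (Fin n → ℕ), IsBlockExpansion χ σ x) ∧
    (∀ x y : ℕ × ℕ × (Fin n → ℕ),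
      IsBlockExpansion χ σ x → IsBlockExpansion χ σ y → x = y) :=
  ⟨⟨exists_isBlockExpansion_of_skel_eq (by omega), fun ⟨_, hx⟩ => hx.skel_eq hn hχ⟩,
    fun _ _ hx hy => hx.unique hy hn hχ⟩

/-- Let `χ ∈ Σ_n` be primitive, `n ≥ 2`, and `m ≥ 1`.  Then `σ ∈ Σ_m` has skeleton
`κ(σ) = χ` if and only if `σ = id_a × χ⟨m₁,…,m_n⟩ × id_c` for some `a, c ≥ 0` and
`m₁,…,m_n ≥ 1` with `a + c + m₁ + ⋯ + m_n = m`; moreover such `(a, c, m₁,…,m_n)` are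
uniquely determined by `σ`. -/
theorem skel_eq_iff_block_expansion (n : ℕ) (hn : 2 ≤ n) (χ : Equiv.Perm (Fin n))
    (hχ : grade χ = 0) (m : ℕ) (hm : 1 ≤ m) (σ : Equiv.Perm (Fin m)) :
    (skel σ = ⟨n, χ⟩ ↔ ∃ x : ℕ × ℕ × (Fin n → ℕ), IsBlockExpansion χ σ x) ∧
    (∀ x y : ℕ × ℕ × (Fin n → ℕ),
      IsBlockExpansion χ σ x → IsBlockExpansion χ σ y → x = y) :=
  skel_eq_iff_block_expansion_general n hn χ hχ m σ

end MarklOps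
end
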